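/- For all j₁, j₂, j₃ ∈ R′ with j₁ < j₂ < j₃, it holds rend(j₁) ≤ j₃ − τ − 1. Consequently, every position x ∈ [1..n] belongs to at most two intervals of the family {[j..rend(j)) : j ∈ R′}, and ∑_{j ∈ R′} (rend(j) − j) ≤ 2n. -/

import Mathlib

open scoped Classical

namespace CSA

/-- Character of a 1-indexed string at position `i` (junk value 0 out of range). -/
def idx (S : List ℕ) (i : ℕ) : ℕ := S.getD (i - 1) 0

/-- Substring `S[i..j)` in the 1-indexed, half-open convention. -/
def sub (S : List ℕ) (i j : ℕ) : List ℕ := (S.drop (i - 1)).take (j - i)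

/-- Suffix `S[i..|S|]` (1-indexed). -/
def suf (S : List ℕ) (i : ℕ) : List ℕ := S.drop (i - 1)

/-- Length of the longest common prefix of two strings. -/
def lcp (A B : List ℕ) : ℕ := ((A.zip B).takeWhile fun p => p.1 == p.2).length

/-- `LCE T j₁ j₂` is the length of the longest common prefix of `T[j₁..n]` and `T[j₂..n]`. -/
def LCE (T : List ℕ) (j₁ j₂ : ℕ) : ℕ := lcp (suf T j₁) (suf T j₂)

/-- `p` is a period of `S`. -/
def IsPeriod (S : List ℕ) (p : ℕ) : Prop :=
  1 ≤ p ∧ p ≤ S.length ∧ ∀ i, i + p < S.length → S.getD i 0 = S.getD (i + p) 0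

/-- The shortest period of `S`. -/
noncomputable def per (S : List ℕ) : ℕ := sInf {p | IsPeriod S p}

/-- `R = {i ∈ [1..n−3τ+2] : per(T[i..i+3τ−1)) ≤ τ/3}`. -/
noncomputable def R (T : List ℕ) (τ : ℕ) : Set ℕ :=
  {i | 1 ≤ i ∧ i + 3 * τ ≤ T.length + 2 ∧ 3 * per (sub T i (i + 3 * τ - 1)) ≤ τ}

/-- `rend(j) = min{j′ ≥ j : j′ ∉ R} + 3τ − 2`. -/
noncomputable def rend (T : List ℕ) (τ j : ℕ) : ℕ :=
  sInf {j' | j ≤ j' ∧ j' ∉ R T τ} + 3 * τ - 2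

/-- `L-root(j)`: lexicographically smallest among `{T[j+t..j+t+p) : 0 ≤ t < p}`
where `p = per(T[j..j+3τ−1))`. -/
noncomputable def Lroot (T : List ℕ) (τ j : ℕ) : List ℕ :=
  WithTop.untopD [] ((Finset.range (per (sub T j (j + 3 * τ - 1)))).image fun t =>
      sub T (j + t) (j + t + per (sub T j (j + 3 * τ - 1)))).min

/-- `L-head(j)`: the (unique) `s ∈ [0..p)` with `T[j+s..j+s+p) = L-root(j)`. -/
noncomputable def Lhead (T : List ℕ) (τ j : ℕ) : ℕ :=
  sInf {s | s < per (sub T j (j + 3 * τ - 1)) ∧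
    sub T (j + s) (j + s + per (sub T j (j + 3 * τ - 1))) = Lroot T τ j}

noncomputable def Lexp (T : List ℕ) (τ j : ℕ) : ℕ :=
  (rend T τ j - j - Lhead T τ j) / per (sub T j (j + 3 * τ - 1))

noncomputable def Ltail (T : List ℕ) (τ j : ℕ) : ℕ :=
  (rend T τ j - j - Lhead T τ j) % per (sub T j (j + 3 * τ - 1))

noncomputable def rendfull (T : List ℕ) (τ j : ℕ) : ℕ := rend T τ j - Ltail T τ j

/-- `type(j) = +1` if `rend(j) ≤ n` and `T[rend(j)] > T[rend(j)−p]`, and `−1` otherwise. -/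
noncomputable def typ (T : List ℕ) (τ j : ℕ) : ℤ :=
  if rend T τ j ≤ T.length ∧
      idx T (rend T τ j - per (sub T j (j + 3 * τ - 1))) < idx T (rend T τ j)
    then 1 else -1

noncomputable def Rminus (T : List ℕ) (τ : ℕ) : Set ℕ := {j ∈ R T τ | typ T τ j = -1}

noncomputable def RH (T : List ℕ) (τ : ℕ) (H : List ℕ) : Set ℕ :=
  {j ∈ R T τ | Lroot T τ j = H}

noncomputable def RsH (T : List ℕ) (τ s : ℕ) (H : List ℕ) : Set ℕ :=
  {j ∈ R T τ | Lroot T τ j = H ∧ Lhead T τ j = s}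

noncomputable def RminusH (T : List ℕ) (τ : ℕ) (H : List ℕ) : Set ℕ :=
  Rminus T τ ∩ RH T τ H

noncomputable def RminusSH (T : List ℕ) (τ s : ℕ) (H : List ℕ) : Set ℕ :=
  Rminus T τ ∩ RsH T τ s H

noncomputable def Rprime (T : List ℕ) (τ : ℕ) : Set ℕ := {j ∈ R T τ | j - 1 ∉ R T τ}

/-- `Occ(P,S)`: the set of (1-indexed) starting positions of occurrences of `P` in `S`. -/
def OccSet (P S : List ℕ) : Set ℕ :=
  {j | 1 ≤ j ∧ j + P.length ≤ S.length + 1 ∧ sub S j (j + P.length) = P}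

noncomputable def RangeBeg (P T : List ℕ) : ℕ :=
  Set.ncard {i | 1 ≤ i ∧ i ≤ T.length ∧ suf T i < P}

noncomputable def RangeEnd (P T : List ℕ) : ℕ := RangeBeg P T + (OccSet P T).ncard

/-- `ISA[j]`: the lexicographic rank of the suffix `T[j..n]` among all suffixes of `T`. -/
noncomputable def ISA (T : List ℕ) (j : ℕ) : ℕ :=
  Set.ncard {j' | 1 ≤ j' ∧ j' ≤ T.length ∧ suf T j' ≤ suf T j}

/-- `succ_S(i) = min{j ∈ S ∪ {n−2τ+2} : j ≥ i}`. -/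
noncomputable def succS (T : List ℕ) (τ : ℕ) (Sync : Set ℕ) (i : ℕ) : ℕ :=
  sInf {j | i ≤ j ∧ (j ∈ Sync ∨ j = T.length + 2 - 2 * τ)}

/-- The set `D` of distinguishing prefixes. -/
noncomputable def Dset (T : List ℕ) (τ : ℕ) (Sync : Set ℕ) : Set (List ℕ) :=
  {X | ∃ i, 1 ≤ i ∧ i + 3 * τ ≤ T.length + 2 ∧ i ∉ R T τ ∧
    X = sub T i (succS T τ Sync i + 2 * τ)}

/-- `T^∞[i] = T[1 + ((i−1) mod n)]` for `i : ℤ`. -/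
def tinf (T : List ℕ) (i : ℤ) : ℕ := idx T (((i - 1).emod (T.length : ℤ)).toNat + 1)

/-- `W[i]`: the reverse of `T^∞[s^lex_i − τ .. s^lex_i + 2τ)`. -/
def Wstr (T : List ℕ) (τ : ℕ) (slex : ℕ → ℕ) (i : ℕ) : List ℕ :=
  ((List.range (3 * τ)).map fun k => tinf T ((slex i : ℤ) - (τ : ℤ) + (k : ℤ))).reverse

/- Pattern versions of the `L`-decomposition functions. -/

noncomputable def perP (τ : ℕ) (P : List ℕ) : ℕ := per (P.take (3 * τ - 1))

/-- A pattern is periodic if `|P| ≥ 3τ−1` and `per(P[1..3τ−1]) ≤ τ/3`. -/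
noncomputable def Periodic (τ : ℕ) (P : List ℕ) : Prop :=
  3 * τ - 1 ≤ P.length ∧ 3 * perP τ P ≤ τ

noncomputable def pend (τ : ℕ) (P : List ℕ) : ℕ :=
  1 + perP τ P + lcp P (P.drop (perP τ P))

noncomputable def LrootP (τ : ℕ) (P : List ℕ) : List ℕ :=
  WithTop.untopD [] ((Finset.range (perP τ P)).image fun t => (P.drop t).take (perP τ P)).min

noncomputable def LheadP (τ : ℕ) (P : List ℕ) : ℕ :=
  sInf {s | s < perP τ P ∧ (P.drop s).take (perP τ P) = LrootP τ P}

noncomputable def LexpP (τ : ℕ) (P : List ℕ) : ℕ :=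
  (pend τ P - 1 - LheadP τ P) / perP τ P

noncomputable def LtailP (τ : ℕ) (P : List ℕ) : ℕ :=
  (pend τ P - 1 - LheadP τ P) % perP τ P

noncomputable def pendfullP (τ : ℕ) (P : List ℕ) : ℕ := pend τ P - LtailP τ P

noncomputable def typP (τ : ℕ) (P : List ℕ) : ℤ :=
  if pend τ P ≤ P.length ∧ idx P (pend τ P - perP τ P) < idx P (pend τ P)
    then 1 else -1

/-- `pow(H)`: the prefix of length `|H|·⌈τ/|H|⌉` of `H^∞`. -/
def powS (τ : ℕ) (H : List ℕ) : List ℕ :=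
  (List.replicate ((τ + H.length - 1) / H.length) H).flatten

/-! A window `T[j..j+3τ−1)` with a period `p ≤ τ/3` is so long that two such windows starting
less than `3τ − 2⌊τ/3⌋` apart overlap in at least `p + q` characters; a standard overlap argument
then propagates the period of the second window back over the first, so every position between
the two starts lies in `R`. Hence a maximal run of `R` is followed by a gap of length about `3τ`
before the next run starts, which forces `rend(j₁) + τ < j₃` for three starts of runs `j₁ < j₂ < j₃`.
Each position is then covered by at most two intervals `[j..rend(j))`, and the sum bound follows
by double counting. -/

def HasPeriodOn (T : List ℕ) (a b p : ℕ) : Prop :=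
  ∀ i, a ≤ i → i + p < b → idx T i = idx T (i + p)

namespace HasPeriodOn

variable {T : List ℕ} {a b a' b' p q : ℕ}

theorem mono (h : HasPeriodOn T a b p) (ha : a ≤ a') (hb : b' ≤ b) : HasPeriodOn T a' b' p :=
  fun i hi hib => h i (ha.trans hi) (hib.trans_le hb)

theorem extend (hp : HasPeriodOn T a b p) (hq : HasPeriodOn T a' b' q) (hp1 : 1 ≤ p)
    (hb : a' + p + q ≤ b) (hbb : b ≤ b') : HasPeriodOn T a b' q := by
  suffices ∀ d i, a' - i = d → a ≤ i → i + q < b' → idx T i = idx T (i + q) from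
    fun i => this _ i rfl
  intro d
  induction d using Nat.strong_induction_on with
  | _ d ih =>
    intro i hd hai hib
    by_cases hi : a' ≤ i
    · exact hq i hi hib
    · calc idx T i = idx T (i + p) := hp i hai (by omega)
        _ = idx T (i + p + q) := ih (a' - (i + p)) (by omega) (i + p) rfl (by omega) (by omega)
        _ = idx T (i + q) := by rw [add_right_comm]; exact (hp (i + q) (by omega) (by omega)).symm

end HasPeriodOn

section Windows

variable {T : List ℕ} {a L p : ℕ}

theorem length_sub (ha : 1 ≤ a) (hL : a + L ≤ T.length + 1) : (sub T a (a + L)).length = L := by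
  rw [sub, List.length_take, List.length_drop]
  omega

theorem getD_sub {i : ℕ} (ha : 1 ≤ a) (hi : i < L) :
    (sub T a (a + L)).getD i 0 = idx T (a + i) := by
  rw [sub, idx, Nat.add_sub_cancel_left, List.getD_eq_getElem?_getD, List.getD_eq_getElem?_getD,
    List.getElem?_take_of_lt hi, List.getElem?_drop, show a - 1 + i = a + i - 1 by omega]

theorem isPeriod_sub_iff (ha : 1 ≤ a) (hL : a + L ≤ T.length + 1) (hp : 1 ≤ p) (hpL : p ≤ L) :
    IsPeriod (sub T a (a + L)) p ↔ HasPeriodOn T a (a + L) p := by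
  rw [IsPeriod, length_sub ha hL]
  constructor
  · rintro ⟨-, -, h⟩ i hai hib
    have := h (i - a) (by omega)
    rwa [getD_sub ha (by omega), getD_sub ha (by omega), show a + (i - a) = i by omega,
      show a + (i - a + p) = i + p by omega] at this
  · intro h
    refine ⟨hp, hpL, fun i hi => ?_⟩
    rw [getD_sub ha (by omega), getD_sub ha hi, ← add_assoc]
    exact h (a + i) (by omega) (by omega)

end Windows

section Runs

variable {T : List ℕ} {τ : ℕ}

theorem mem_R_iff (hτ : 1 ≤ τ) {j : ℕ} :
    j ∈ R T τ ↔ 1 ≤ j ∧ j + 3 * τ ≤ T.length + 2 ∧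
      ∃ p, 1 ≤ p ∧ 3 * p ≤ τ ∧ HasPeriodOn T j (j + 3 * τ - 1) p := by
  have hwin : j + 3 * τ - 1 = j + (3 * τ - 1) := by omega
  refine ⟨fun ⟨hj, hjn, hper⟩ => ⟨hj, hjn, ?_⟩, fun ⟨hj, hjn, p, hp, hpτ, hpT⟩ => ⟨hj, hjn, ?_⟩⟩
  · rw [hwin] at hper ⊢
    have hlen := length_sub (T := T) hj (L := 3 * τ - 1) (by omega)
    have hmem : per (sub T j (j + (3 * τ - 1))) ∈ {p | IsPeriod (sub T j (j + (3 * τ - 1))) p} :=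
      Nat.sInf_mem ⟨_, by omega, le_rfl, fun i hi => absurd hi (by omega)⟩
    have hp1 : 1 ≤ per (sub T j (j + (3 * τ - 1))) := hmem.1
    exact ⟨_, hp1, hper, (isPeriod_sub_iff hj (by omega) hp1 (by omega)).1 hmem⟩
  · rw [hwin] at hpT ⊢
    have : per (sub T j (j + (3 * τ - 1))) ≤ p :=
      Nat.sInf_le ((isPeriod_sub_iff hj (by omega) hp (by omega)).2 hpT)
    omega

theorem Icc_subset_R (hτ : 1 ≤ τ) {i j : ℕ} (hi : i ∈ R T τ) (hj : j ∈ R T τ) (hij : i ≤ j)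
    (hclose : j + 2 * (τ / 3) + 1 ≤ i + 3 * τ) : Set.Icc i j ⊆ R T τ := by
  obtain ⟨hi1, -, p, hp, hpτ, hpT⟩ := (mem_R_iff hτ).1 hi
  obtain ⟨-, hjn, q, hq, hqτ, hqT⟩ := (mem_R_iff hτ).1 hj
  have hext := hpT.extend hqT hp (by omega) (by omega)
  rintro k ⟨hik, hkj⟩
  exact (mem_R_iff hτ).2 ⟨by omega, by omega, q, hq, hqτ, hext.mono hik (by omega)⟩

theorem exists_run {j : ℕ} (hj : j ∈ R T τ) :
    ∃ e, j < e ∧ e ∉ R T τ ∧ Set.Ico j e ⊆ R T τ ∧ rend T τ j = e + 3 * τ - 2 := by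
  have hne : {j' | j ≤ j' ∧ j' ∉ R T τ}.Nonempty :=
    ⟨j + T.length + 3, by omega, fun h => by have := h.2.1; omega⟩
  obtain ⟨hje, he⟩ := Nat.sInf_mem hne
  have hmin : Set.Ico j (sInf {j' | j ≤ j' ∧ j' ∉ R T τ}) ⊆ R T τ := fun k ⟨hjk, hk⟩ => by
    by_contra hkR
    exact absurd (Nat.sInf_le (show k ∈ {j' | j ≤ j' ∧ j' ∉ R T τ} from ⟨hjk, hkR⟩)) (by omega)
  exact ⟨_, lt_of_le_of_ne hje fun h => he (h ▸ hj), he, hmin, rfl⟩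

theorem rend_le_length {j : ℕ} (hj : j ∈ R T τ) : rend T τ j ≤ T.length + 1 := by
  obtain ⟨e, hje, -, hrun, hrend⟩ := exists_run hj
  have := (hrun ⟨(by omega : j ≤ e - 1), by omega⟩).2.1
  omega

theorem add_le_rend {j : ℕ} (hj : j ∈ R T τ) : j + 3 * τ - 1 ≤ rend T τ j := by
  obtain ⟨e, hje, -, -, hrend⟩ := exists_run hj
  omega

theorem rend_add_le_of_mem_Rprime (hτ : 1 ≤ τ) {j j' : ℕ} (hj : j ∈ R T τ)
    (hj' : j' ∈ Rprime T τ) (hjj' : j < j') : rend T τ j + 1 ≤ j' + 2 * (τ / 3) := by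
  obtain ⟨hj'R, hpred⟩ := hj'
  obtain ⟨e, hje, he, hrun, hrend⟩ := exists_run hj
  have hej' : e < j' := by
    by_contra! h
    exact hpred (hrun ⟨by omega, by omega⟩)
  have hgap : ¬ j' + 2 * (τ / 3) + 1 ≤ e - 1 + 3 * τ := fun hclose =>
    he (Icc_subset_R hτ (hrun ⟨by omega, by omega⟩) hj'R (by omega) hclose ⟨by omega, hej'.le⟩)
  omega

theorem rend_add_le_of_lt_of_lt (hτ : 1 ≤ τ) {j₁ j₂ j₃ : ℕ} (h₁ : j₁ ∈ Rprime T τ)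
    (h₂ : j₂ ∈ Rprime T τ) (h₃ : j₃ ∈ Rprime T τ) (h₁₂ : j₁ < j₂) (h₂₃ : j₂ < j₃) :
    rend T τ j₁ + τ + 1 ≤ j₃ := by
  have := rend_add_le_of_mem_Rprime hτ h₁.1 h₂ h₁₂
  have := rend_add_le_of_mem_Rprime hτ h₂.1 h₃ h₂₃
  have := add_le_rend h₂.1
  omega

end Runs

theorem ncard_le_two_of_forall_not_lt_lt {α : Type*} [LinearOrder α] {s : Set α}
    (h : ∀ a ∈ s, ∀ b ∈ s, ∀ c ∈ s, a < b → ¬ b < c) : s.ncard ≤ 2 := by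
  by_contra! hs
  have hfin : s.Finite := Set.finite_of_ncard_pos (by omega)
  have hcard : hfin.toFinset.card = s.ncard := (Set.ncard_eq_toFinset_card s hfin).symm
  let f := hfin.toFinset.orderEmbOfFin hcard
  have hf : ∀ i, f i ∈ s := fun i => hfin.mem_toFinset.1 (Finset.orderEmbOfFin_mem _ hcard i)
  exact h _ (hf ⟨0, by omega⟩) _ (hf ⟨1, hs.trans' one_lt_two⟩) _ (hf ⟨2, hs⟩)
    (f.strictMono (by simp [Fin.lt_def])) (f.strictMono (by simp [Fin.lt_def]))

theorem sum_sub_le_mul_of_card_le {s : Finset ℕ} {l r : ℕ → ℕ} {n k : ℕ}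
    (hsub : ∀ j ∈ s, 1 ≤ l j ∧ r j ≤ n + 1)
    (hcover : ∀ x ∈ Finset.Icc 1 n, (s.filter fun j => l j ≤ x ∧ x < r j).card ≤ k) :
    ∑ j ∈ s, (r j - l j) ≤ k * n := by
  let covers : ℕ → ℕ → Prop := fun j x => l j ≤ x ∧ x < r j
  calc ∑ j ∈ s, (r j - l j) = ∑ j ∈ s, ((Finset.Icc 1 n).bipartiteAbove covers j).card := by
        refine Finset.sum_congr rfl fun j hj => ?_
        have hIco : (Finset.Icc 1 n).bipartiteAbove covers j = Finset.Ico (l j) (r j) := by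
          ext x
          simp only [Finset.mem_bipartiteAbove, Finset.mem_Icc, Finset.mem_Ico, covers]
          have := hsub j hj
          omega
        rw [hIco, Nat.card_Ico]
    _ = ∑ x ∈ Finset.Icc 1 n, (s.bipartiteBelow covers x).card :=
        Finset.sum_card_bipartiteAbove_eq_sum_card_bipartiteBelow covers
    _ ≤ (Finset.Icc 1 n).card • k := Finset.sum_le_card_nsmul _ _ _ hcover
    _ = k * n := by rw [Nat.card_Icc, smul_eq_mul, Nat.add_sub_cancel, mul_comm]

theorem statement_19_general
    (n τ : ℕ) (T : List ℕ)
    (hτ : 1 ≤ τ)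
    (hlen : T.length = n)
    : (∀ j₁ ∈ Rprime T τ, ∀ j₂ ∈ Rprime T τ, ∀ j₃ ∈ Rprime T τ,
        j₁ < j₂ → j₂ < j₃ → rend T τ j₁ + τ + 1 ≤ j₃) ∧
      (∀ x, 1 ≤ x → x ≤ n →
        ({j ∈ Rprime T τ | j ≤ x ∧ x < rend T τ j}).ncard ≤ 2) ∧
      ∑ j ∈ (Finset.range (n + 1)).filter (· ∈ Rprime T τ), (rend T τ j - j)
        ≤ 2 * n := by
  have hcover : ∀ x, ({j ∈ Rprime T τ | j ≤ x ∧ x < rend T τ j}).ncard ≤ 2 := fun x =>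
    ncard_le_two_of_forall_not_lt_lt fun a ⟨ha, _, hxa⟩ b ⟨hb, _⟩ c ⟨hc, hcx, _⟩ hab hbc => by
      have := rend_add_le_of_lt_of_lt hτ ha hb hc hab hbc
      omega
  refine ⟨fun _ h₁ _ h₂ _ h₃ => rend_add_le_of_lt_of_lt hτ h₁ h₂ h₃, fun x _ _ => hcover x, ?_⟩
  refine sum_sub_le_mul_of_card_le (fun j hj => ?_) fun x _ => ?_
  · have hj := (Finset.mem_filter.1 hj).2
    exact ⟨hj.1.1, hlen ▸ rend_le_length hj.1⟩
  · refine (Set.ncard_coe_finset _).symm.trans_le ((Set.ncard_le_ncard ?_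
      ((Set.finite_Iic x).subset fun j hj => hj.2.1)).trans (hcover x))
    intro j hj
    rw [Finset.mem_coe, Finset.mem_filter, Finset.mem_filter] at hj
    exact ⟨hj.1.2, hj.2⟩

/-- Lemma: runs starting at `R′` cover each position at most twice. -/
theorem statement_19
    (σ n τ : ℕ) (T : List ℕ)
    (hσ : 2 ≤ σ) (hn : 2 ≤ n) (hτ : 1 ≤ τ)
    (hlen : T.length = n) (halph : ∀ c ∈ T, c < σ)
    (hlast : idx T n = 0) (huniq : ∀ i, 1 ≤ i → i < n → idx T i ≠ 0)
    : (∀ j₁ ∈ Rprime T τ, ∀ j₂ ∈ Rprime T τ, ∀ j₃ ∈ Rprime T τ,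
        j₁ < j₂ → j₂ < j₃ → rend T τ j₁ + τ + 1 ≤ j₃) ∧
      (∀ x, 1 ≤ x → x ≤ n →
        ({j ∈ Rprime T τ | j ≤ x ∧ x < rend T τ j}).ncard ≤ 2) ∧
      ∑ j ∈ (Finset.range (n + 1)).filter (· ∈ Rprime T τ), (rend T τ j - j)
        ≤ 2 * n :=
  statement_19_general n τ T hτ hlen
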